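/- arXiv:2103.13441 — 4 statements merged into one kernel-verified Lean document; each statement's English description precedes it below -/
import Mathlib

section
/- For all real numbers ρ and η with 0 < ρ < 1 and η > 0, the double series Σ_{s=0}^{∞} ρ^s · Σ_{i=1}^{s} (1/(η+1))^i converges, and 2·( ρ/(1−ρ) − (1−ρ)·Σ_{s=0}^{∞} ρ^s · Σ_{i=1}^{s} (1/(η+1))^i ) = 2·(ρ/(1−ρ))·(η/(η+1−ρ)). -/
/-!
Summing the inner geometric series, the `s`-th term is `q/(1-q) · (r^s - (rq)^s)`, so the double
series is a difference of two geometric series with sum `rq/((1-r)(1-rq))`. For `r = ρ` and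
`q = 1/(η+1)` the identity is then algebra.
-/

open Finset

theorem sum_Icc_one_pow_mul_one_sub {R : Type*} [CommRing R] (q : R) (s : ℕ) :
    (∑ i ∈ Icc 1 s, q ^ i) * (1 - q) = q * (1 - q ^ s) := by
  induction s with
  | zero => simp
  | succ n ih =>
    rw [sum_Icc_succ_top (by omega), add_mul, ih]
    ring

theorem hasSum_pow_mul_sum_Icc_one_pow {K : Type*} [NormedField K] [CompleteSpace K] {r q : K}
    (hr : ‖r‖ < 1) (hq : ‖q‖ < 1) :
    HasSum (fun s : ℕ => r ^ s * ∑ i ∈ Icc 1 s, q ^ i) (r * q / ((1 - r) * (1 - r * q))) := by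
  have hrq : ‖r * q‖ < 1 := by
    rw [norm_mul]
    exact mul_lt_one_of_nonneg_of_lt_one_left (norm_nonneg r) hr hq.le
  have h1r : 1 - r ≠ 0 := sub_ne_zero.2 fun h => by simp [← h] at hr
  have h1q : 1 - q ≠ 0 := sub_ne_zero.2 fun h => by simp [← h] at hq
  have h1rq : 1 - r * q ≠ 0 := sub_ne_zero.2 fun h => by simp [← h] at hrq
  have hterm : ∀ s : ℕ, r ^ s * ∑ i ∈ Icc 1 s, q ^ i = q / (1 - q) * (r ^ s - (r * q) ^ s) := by
    intro s
    rw [div_mul_eq_mul_div, eq_div_iff h1q, mul_assoc, sum_Icc_one_pow_mul_one_sub]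
    ring
  have hgeom := ((hasSum_geometric_of_norm_lt_one hr).sub
    (hasSum_geometric_of_norm_lt_one hrq)).mul_left (q / (1 - q))
  have hvalue : r * q / ((1 - r) * (1 - r * q)) = q / (1 - q) * ((1 - r)⁻¹ - (1 - r * q)⁻¹) := by
    field_simp
    ring
  simpa only [hterm, hvalue] using hgeom

/-- The series evaluation at the core of Proposition 2: for `0 < ρ < 1` and `η > 0`,
the double series `Σ_s ρ^s Σ_{i=1}^s (1/(η+1))^i` converges and
`2(ρ/(1-ρ) - (1-ρ)·Σ) = 2(ρ/(1-ρ))(η/(η+1-ρ))`. -/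
theorem stmt_2 (ρ η : ℝ) (hρ0 : 0 < ρ) (hρ1 : ρ < 1) (hη : 0 < η) :
    Summable (fun s : ℕ => ρ ^ s * ∑ i ∈ Finset.Icc 1 s, (1 / (η + 1)) ^ i) ∧
    2 * (ρ / (1 - ρ) -
        (1 - ρ) * ∑' s : ℕ, ρ ^ s * ∑ i ∈ Finset.Icc 1 s, (1 / (η + 1)) ^ i)
      = 2 * (ρ / (1 - ρ)) * (η / (η + 1 - ρ)) := by
  have hr : ‖ρ‖ < 1 := by rwa [Real.norm_of_nonneg hρ0.le]
  have hq : ‖1 / (η + 1)‖ < 1 := by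
    rw [Real.norm_of_nonneg (by positivity), div_lt_one (by linarith)]
    linarith
  have hsum := hasSum_pow_mul_sum_Icc_one_pow hr hq
  refine ⟨hsum.summable, ?_⟩
  rw [hsum.tsum_eq]
  have : 1 - ρ ≠ 0 := by linarith
  have : η + 1 - ρ ≠ 0 := by linarith
  field_simp
  ring
end

section
/- Define F(λ, μ, α) = 2·λ²·α / ((μ−λ)·(α+μ−λ)) for 0 < λ < μ and α > 0. Then: (i) for each fixed μ > 0 and α > 0, the map λ ↦ F(λ, μ, α) is strictly increasing and convex on (0, μ); (ii) for each fixed λ > 0 and α > 0, the map μ ↦ F(λ, μ, α) is strictly decreasing and convex on (λ, ∞); (iii) for each fixed 0 < λ < μ, the map α ↦ F(λ, μ, α) is strictly increasing and concave on (0, ∞). -/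
/-!
In the arrival rate the function is `2α · (λ/(μ-λ)) · (λ/(α+μ-λ))`, and in the service rate it is
`2λ²α · (μ-λ)⁻¹ · (μ-λ+α)⁻¹`: in both cases a product of two nonnegative convex factors that are
strictly monotone in the same direction, and such a product is convex (`ConvexOn.mul`) and strictly
monotone. In the transmission rate it is a positive multiple of `α/(α+c) = 1 - c/(α+c)` with
`c = μ-λ > 0`, which is strictly increasing and concave.
-/

open Set

section Products
variable {ι M₀ : Type*} [Preorder ι] [MulZeroClass M₀] [PartialOrder M₀]
  [PosMulStrictMono M₀] [MulPosStrictMono M₀] {s : Set ι} {f g : ι → M₀}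

theorem StrictMonoOn.mul (hf : StrictMonoOn f s) (hg : StrictMonoOn g s)
    (hf₀ : ∀ x ∈ s, 0 ≤ f x) (hg₀ : ∀ x ∈ s, 0 ≤ g x) : StrictMonoOn (f * g) s :=
  fun x hx _ hy h ↦ mul_lt_mul'' (hf hx hy h) (hg hx hy h) (hf₀ x hx) (hg₀ x hx)

theorem StrictAntiOn.mul (hf : StrictAntiOn f s) (hg : StrictAntiOn g s)
    (hf₀ : ∀ x ∈ s, 0 ≤ f x) (hg₀ : ∀ x ∈ s, 0 ≤ g x) : StrictAntiOn (f * g) s :=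
  fun _ hx y hy h ↦ mul_lt_mul'' (hf hx hy h) (hg hx hy h) (hf₀ y hy) (hg₀ y hy)

end Products

theorem convexOn_inv_sub (c : ℝ) : ConvexOn ℝ (Ioi c) fun x ↦ (x - c)⁻¹ := by
  simpa [Function.comp_def, sub_eq_add_neg] using (convexOn_zpow (-1)).translate_left (-c)

theorem strictAntiOn_inv_sub (c : ℝ) : StrictAntiOn (fun x ↦ (x - c)⁻¹) (Ioi c) :=
  fun _ hx _ _ h ↦ inv_strictAnti₀ (sub_pos.2 hx) (sub_lt_sub_right h c)

theorem convexOn_inv_const_sub (c : ℝ) : ConvexOn ℝ (Iio c) fun x ↦ (c - x)⁻¹ := by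
  have h := (convexOn_zpow (-1)).comp_affineMap (AffineMap.const ℝ ℝ c - AffineMap.id ℝ ℝ)
  have hs : (Function.const ℝ c - id) ⁻¹' Ioi 0 = Iio c := by ext; simp
  simpa [Function.comp_def, hs] using h

theorem strictMonoOn_div_const_sub {c : ℝ} (hc : 0 < c) :
    StrictMonoOn (fun x ↦ x / (c - x)) (Iio c) :=
  fun x hx y hy h ↦ by
    rw [div_lt_div_iff₀ (sub_pos.2 hx) (sub_pos.2 hy)]
    nlinarith

theorem convexOn_div_const_sub {c : ℝ} (hc : 0 ≤ c) : ConvexOn ℝ (Iio c) fun x ↦ x / (c - x) :=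
  (((convexOn_inv_const_sub c).smul hc).add_const (-1)).congr fun x hx ↦ by
    have : c - x ≠ 0 := (sub_pos.2 hx).ne'
    simp only [Pi.add_apply, smul_eq_mul]
    field_simp
    ring

theorem strictMonoOn_div_add_const {c : ℝ} (hc : 0 < c) :
    StrictMonoOn (fun x ↦ x / (x + c)) (Ioi (-c)) :=
  fun x hx y hy h ↦ by
    rw [div_lt_div_iff₀ (neg_lt_iff_pos_add.1 hx) (neg_lt_iff_pos_add.1 hy)]
    nlinarith

theorem concaveOn_div_add_const {c : ℝ} (hc : 0 ≤ c) :
    ConcaveOn ℝ (Ioi (-c)) fun x ↦ x / (x + c) :=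
  ((concaveOn_const 1 (convex_Ioi _)).sub ((convexOn_inv_sub (-c)).smul hc)).congr fun x hx ↦ by
    have : x + c ≠ 0 := (neg_lt_iff_pos_add.1 hx).ne'
    simp only [Pi.sub_apply, smul_eq_mul, sub_neg_eq_add]
    field_simp
    ring

/-- `λ · R₀^sys` for the M/M/1/FCFS queue with arrival rate `lam`, service rate `μ` and
transmission rate `α`. -/
noncomputable def infectionRate (lam μ α : ℝ) : ℝ :=
  2 * lam ^ 2 * α / ((μ - lam) * (α + μ - lam))

theorem infectionRate_eq_mul_div_mul_div (lam μ α : ℝ) :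
    infectionRate lam μ α = 2 * α * (lam / (μ - lam) * (lam / (α + μ - lam))) := by
  rw [infectionRate, div_eq_mul_inv, mul_inv]
  ring

theorem infectionRate_eq_mul_inv_mul_inv (lam μ α : ℝ) :
    infectionRate lam μ α = 2 * lam ^ 2 * α * ((μ - lam)⁻¹ * (μ - (lam - α))⁻¹) := by
  rw [infectionRate, div_eq_mul_inv, mul_inv]
  ring

theorem infectionRate_eq_mul_div_add (lam μ α : ℝ) :
    infectionRate lam μ α = 2 * lam ^ 2 / (μ - lam) * (α / (α + (μ - lam))) := by
  rw [infectionRate, div_eq_mul_inv, mul_inv]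
  ring

theorem strictMonoOn_convexOn_infectionRate_arrival {μ α : ℝ} (hμ : 0 < μ) (hα : 0 < α) :
    StrictMonoOn (infectionRate · μ α) (Ioo 0 μ) ∧
      ConvexOn ℝ (Ioo 0 μ) (infectionRate · μ α) := by
  have hp_mono (c : ℝ) (hc : μ ≤ c) : StrictMonoOn (fun l ↦ l / (c - l)) (Ioo 0 μ) :=
    (strictMonoOn_div_const_sub (hμ.trans_le hc)).mono fun l hl ↦ hl.2.trans_le hc
  have hp_convex (c : ℝ) (hc : μ ≤ c) : ConvexOn ℝ (Ioo 0 μ) (fun l ↦ l / (c - l)) :=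
    (convexOn_div_const_sub (hμ.le.trans hc)).subset (fun l hl ↦ hl.2.trans_le hc)
      (convex_Ioo 0 μ)
  have hp_nonneg (c : ℝ) (hc : μ ≤ c) : ∀ l ∈ Ioo 0 μ, 0 ≤ l / (c - l) := fun l hl ↦
    div_nonneg hl.1.le (sub_nonneg.2 (hl.2.le.trans hc))
  have hαμ : μ ≤ α + μ := by linarith
  have h2α : 0 < 2 * α := by positivity
  have hF : EqOn (fun l ↦ 2 * α * (l / (μ - l) * (l / (α + μ - l)))) (infectionRate · μ α)
      (Ioo 0 μ) := fun l _ ↦ (infectionRate_eq_mul_div_mul_div l μ α).symm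
  have hmono := (hp_mono μ le_rfl).mul (hp_mono _ hαμ) (hp_nonneg μ le_rfl) (hp_nonneg _ hαμ)
  have hconvex := (hp_convex μ le_rfl).mul (hp_convex _ hαμ) (hp_nonneg μ le_rfl)
    (hp_nonneg _ hαμ) ((hp_mono μ le_rfl).monotoneOn.monovaryOn (hp_mono _ hαμ).monotoneOn)
  exact ⟨((strictMono_mul_left_of_pos h2α).comp_strictMonoOn hmono).congr hF,
    (hconvex.smul h2α.le).congr hF⟩

theorem strictAntiOn_convexOn_infectionRate_service {lam α : ℝ} (hlam : 0 < lam) (hα : 0 < α) :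
    StrictAntiOn (infectionRate lam · α) (Ioi lam) ∧
      ConvexOn ℝ (Ioi lam) (infectionRate lam · α) := by
  have hsub : Ioi lam ⊆ Ioi (lam - α) := Ioi_subset_Ioi (by linarith)
  have hq_anti : StrictAntiOn (fun m ↦ (m - (lam - α))⁻¹) (Ioi lam) :=
    (strictAntiOn_inv_sub _).mono hsub
  have hq_convex : ConvexOn ℝ (Ioi lam) (fun m ↦ (m - (lam - α))⁻¹) :=
    (convexOn_inv_sub _).subset hsub (convex_Ioi lam)
  have hq_nonneg (c : ℝ) (hc : c ≤ lam) : ∀ m ∈ Ioi lam, 0 ≤ (m - c)⁻¹ := fun m hm ↦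
    inv_nonneg.2 (sub_nonneg.2 (hc.trans hm.le))
  have hαl : lam - α ≤ lam := by linarith
  have hK : 0 < 2 * lam ^ 2 * α := by positivity
  have hF : EqOn (fun m ↦ 2 * lam ^ 2 * α * ((m - lam)⁻¹ * (m - (lam - α))⁻¹))
      (infectionRate lam · α) (Ioi lam) := fun m _ ↦
    (infectionRate_eq_mul_inv_mul_inv lam m α).symm
  have hanti := (strictAntiOn_inv_sub lam).mul hq_anti (hq_nonneg lam le_rfl) (hq_nonneg _ hαl)
  have hconvex := (convexOn_inv_sub lam).mul hq_convex (hq_nonneg lam le_rfl) (hq_nonneg _ hαl)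
    ((strictAntiOn_inv_sub lam).antitoneOn.monovaryOn hq_anti.antitoneOn)
  exact ⟨((strictMono_mul_left_of_pos hK).comp_strictAntiOn hanti).congr hF,
    (hconvex.smul hK.le).congr hF⟩

theorem strictMonoOn_concaveOn_infectionRate_transmission {lam μ : ℝ} (hlam : 0 < lam)
    (hlμ : lam < μ) :
    StrictMonoOn (infectionRate lam μ ·) (Ioi 0) ∧
      ConcaveOn ℝ (Ioi 0) (infectionRate lam μ ·) := by
  have hc : 0 < μ - lam := sub_pos.2 hlμ
  have hsub : Ioi 0 ⊆ Ioi (-(μ - lam)) := Ioi_subset_Ioi (by linarith)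
  have hK : 0 < 2 * lam ^ 2 / (μ - lam) := by positivity
  have hF : EqOn (fun a ↦ 2 * lam ^ 2 / (μ - lam) * (a / (a + (μ - lam))))
      (infectionRate lam μ ·) (Ioi 0) := fun a _ ↦ (infectionRate_eq_mul_div_add lam μ a).symm
  exact ⟨((strictMono_mul_left_of_pos hK).comp_strictMonoOn
      ((strictMonoOn_div_add_const hc).mono hsub)).congr hF,
    (((concaveOn_div_add_const hc.le).subset hsub (convex_Ioi 0)).smul hK.le).congr hF⟩

/-- For `F(λ,μ,α) = 2λ²α/((μ-λ)(α+μ-λ))`: (i) `λ ↦ F` is strictly increasing and convex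
on `(0,μ)`; (ii) `μ ↦ F` is strictly decreasing and convex on `(λ,∞)`; (iii) `α ↦ F` is
strictly increasing and concave on `(0,∞)`. -/
theorem stmt_6 (F : ℝ → ℝ → ℝ → ℝ)
    (hF : ∀ lam μ α : ℝ, F lam μ α = 2 * lam ^ 2 * α / ((μ - lam) * (α + μ - lam))) :
    (∀ μ α : ℝ, 0 < μ → 0 < α →
      StrictMonoOn (fun lam => F lam μ α) (Set.Ioo 0 μ) ∧
      ConvexOn ℝ (Set.Ioo 0 μ) (fun lam => F lam μ α)) ∧
    (∀ lam α : ℝ, 0 < lam → 0 < α →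
      StrictAntiOn (fun μ => F lam μ α) (Set.Ioi lam) ∧
      ConvexOn ℝ (Set.Ioi lam) (fun μ => F lam μ α)) ∧
    (∀ lam μ : ℝ, 0 < lam → lam < μ →
      StrictMonoOn (fun α => F lam μ α) (Set.Ioi 0) ∧
      ConcaveOn ℝ (Set.Ioi 0) (fun α => F lam μ α)) := by
  obtain rfl : F = infectionRate := funext₃ hF
  exact ⟨fun _ _ ↦ strictMonoOn_convexOn_infectionRate_arrival,
    fun _ _ ↦ strictAntiOn_convexOn_infectionRate_service,
    fun _ _ ↦ strictMonoOn_concaveOn_infectionRate_transmission⟩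
end

section
/- Let c ≥ 2 and m ≥ 1 be integers, and let μ > 0, α > 0 with η = α/μ. Let Y, X, Z be mutually independent random variables where Y has the Gamma distribution with shape m and rate (c−1)μ, and X and Z each have the exponential distribution with rate μ. Then E[ exp(−α · min(Y + X, Z)) ] = ( η·((c−1)/(η+c))^m + η + 2 ) / (η² + 3η + 2). -/
open MeasureTheory ProbabilityTheory Real Set

/-!
For `t ≥ 0` and `Z ~ Exp(μ)` one computes
`E[exp(-α min(t, Z))] = μ/(α+μ) + α/(α+μ) e^{-(α+μ)t}`. Since `T = Y + X` is nonnegative and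
independent of `Z`, the expectation is therefore an affine function of the Laplace transform of
`T` at `α + μ`, which factors by independence into the gamma and exponential transforms
`((c-1)μ/(cμ+α))^m` and `μ/(α+2μ)`.
-/

lemma ae_nonneg_gammaMeasure (a r : ℝ) : ∀ᵐ x ∂gammaMeasure a r, 0 ≤ x :=
  (ae_withDensity_iff (measurable_gammaPDFReal a r).ennreal_ofReal).2 <|
    ae_of_all _ fun _ hx => not_lt.1 fun hneg => hx (gammaPDF_of_neg hneg)

lemma ae_nonneg_expMeasure (r : ℝ) : ∀ᵐ x ∂expMeasure r, 0 ≤ x :=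
  ae_nonneg_gammaMeasure 1 r

lemma integral_gammaMeasure {a r : ℝ} (ha : 0 < a) (hr : 0 < r) (g : ℝ → ℝ) :
    ∫ x, g x ∂gammaMeasure a r
      = ∫ x in Ioi 0, r ^ a / Gamma a * x ^ (a - 1) * exp (-(r * x)) * g x := by
  have hmeas : Measurable (gammaPDF a r) := (measurable_gammaPDFReal a r).ennreal_ofReal
  rw [gammaMeasure, integral_withDensity_eq_integral_toReal_smul hmeas
    (ae_of_all _ fun _ => ENNReal.ofReal_lt_top),
    ← integral_Ici_eq_integral_Ioi, ← setIntegral_eq_integral_of_forall_compl_eq_zero]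
  · refine setIntegral_congr_fun measurableSet_Ici fun x (hx : 0 ≤ x) => ?_
    rw [gammaPDF, ENNReal.toReal_ofReal (gammaPDFReal_nonneg ha hr x), gammaPDFReal, if_pos hx,
      smul_eq_mul]
  · intro x (hx : ¬ 0 ≤ x)
    rw [gammaPDF_of_neg (not_le.1 hx), ENNReal.toReal_zero, zero_smul]

lemma integral_expMeasure {r : ℝ} (hr : 0 < r) (g : ℝ → ℝ) :
    ∫ x, g x ∂expMeasure r = ∫ x in Ioi 0, r * exp (-(r * x)) * g x := by
  simp [expMeasure, integral_gammaMeasure one_pos hr]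

lemma mgf_id_gammaMeasure {a r t : ℝ} (ha : 0 < a) (hr : 0 < r) (ht : t < r) :
    mgf id (gammaMeasure a r) t = (r / (r - t)) ^ a := by
  have hrt : 0 < r - t := sub_pos.2 ht
  have hintegrand : ∀ x ∈ Ioi (0 : ℝ),
      r ^ a / Gamma a * x ^ (a - 1) * exp (-(r * x)) * exp (t * x)
        = r ^ a / Gamma a * (x ^ (a - 1) * exp (-((r - t) * x))) := fun x _ => by
    rw [mul_assoc, mul_assoc, ← exp_add]
    ring_nf
  simp only [mgf, id, integral_gammaMeasure ha hr]
  rw [setIntegral_congr_fun measurableSet_Ioi hintegrand, integral_const_mul,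
    integral_rpow_mul_exp_neg_mul_Ioi ha hrt, div_rpow hr.le hrt.le,
    div_rpow zero_le_one hrt.le, one_rpow]
  field_simp [(Gamma_pos_of_pos ha).ne']

lemma mgf_id_expMeasure {r t : ℝ} (hr : 0 < r) (ht : t < r) :
    mgf id (expMeasure r) t = r / (r - t) := by
  rw [expMeasure, mgf_id_gammaMeasure one_pos hr ht, rpow_one]

lemma integral_exp_neg_mul_min_expMeasure {μ α t : ℝ} (hμ : 0 < μ) (hαμ : 0 < α + μ)
    (ht : 0 ≤ t) :
    ∫ z, exp (-α * min t z) ∂expMeasure μ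
      = μ / (α + μ) + α / (α + μ) * exp (-(α + μ) * t) := by
  set f : ℝ → ℝ := fun z => μ * exp (-(μ * z)) * exp (-α * min t z)
  have hf_below : EqOn f
      (fun z => μ / (α + μ) * ((α + μ) * exp (-((α + μ) * z)))) (Ioc 0 t) := fun z hz => by
    simp only [f, min_eq_right hz.2, mul_assoc, ← exp_add]
    field_simp
    ring_nf
  have hf_above : EqOn f (fun z => μ * exp (-α * t) * exp (-μ * z)) (Ioi t) := fun z hz => by
    simp only [f, min_eq_left (le_of_lt (mem_Ioi.1 hz))]
    ring_nf
  have hbelow : ∫ z in Ioc 0 t, f z = μ / (α + μ) * (1 - exp (-(α + μ) * t)) := by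
    rw [setIntegral_congr_fun measurableSet_Ioc hf_below, integral_const_mul,
      ← intervalIntegral.integral_of_le ht, intervalIntegral.integral_eq_sub_of_hasDerivAt
        (fun _ _ => hasDerivAt_neg_exp_mul_exp)
        ((by fun_prop : Continuous _).intervalIntegrable _ _)]
    simp only [mul_zero, neg_zero, exp_zero, neg_mul]
    ring
  have habove : ∫ z in Ioi t, f z = exp (-(α + μ) * t) := by
    rw [setIntegral_congr_fun measurableSet_Ioi hf_above, integral_const_mul,
      integral_exp_mul_Ioi (neg_lt_zero.2 hμ), neg_div_neg_eq,
      mul_comm μ, mul_assoc, mul_div_cancel₀ _ hμ.ne', ← exp_add]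
    ring_nf
  rw [integral_expMeasure hμ, ← Ioc_union_Ioi_eq_Ioi ht,
    setIntegral_union (Ioc_disjoint_Ioi le_rfl) measurableSet_Ioi ?_ ?_, hbelow, habove]
  · field_simp
    ring
  · exact (integrableOn_congr_fun hf_below measurableSet_Ioc).2
      (Continuous.integrableOn_Ioc (by fun_prop))
  · exact (integrableOn_congr_fun hf_above measurableSet_Ioi).2
      ((exp_neg_integrableOn_Ioi t hμ).const_mul _)

lemma integral_exp_neg_mul_min_of_indepFun {Ω : Type*} [MeasurableSpace Ω] {P : Measure Ω}
    [IsProbabilityMeasure P] {T Z : Ω → ℝ} {μ α : ℝ} (hμ : 0 < μ) (hα : 0 ≤ α)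
    (hT : Measurable T) (hZ : Measurable Z) (hT0 : ∀ᵐ ω ∂P, 0 ≤ T ω)
    (hZlaw : P.map Z = expMeasure μ) (hTZ : IndepFun T Z P) :
    ∫ ω, exp (-α * min (T ω) (Z ω)) ∂P
      = μ / (α + μ) + α / (α + μ) * mgf T P (-(α + μ)) := by
  set g : ℝ × ℝ → ℝ := fun p => exp (-α * min p.1 p.2)
  have hg : Continuous g := by fun_prop
  have hZ0 : ∀ᵐ ω ∂P, 0 ≤ Z ω :=
    ae_of_ae_map hZ.aemeasurable (hZlaw ▸ ae_nonneg_expMeasure μ)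
  have hT0' : ∀ᵐ t ∂P.map T, 0 ≤ t :=
    (ae_map_iff hT.aemeasurable (measurableSet_le measurable_const measurable_id)).2 hT0
  have hTZ_law : P.map (fun ω => (T ω, Z ω)) = (P.map T).prod (expMeasure μ) := by
    rw [← hZlaw]
    exact (indepFun_iff_map_prod_eq_prod_map_map hT.aemeasurable hZ.aemeasurable).1 hTZ
  have hint : Integrable g (P.map fun ω => (T ω, Z ω)) := by
    refine (integrable_map_measure hg.aestronglyMeasurable (hT.prodMk hZ).aemeasurable).2 ?_
    refine Integrable.mono' (integrable_const 1) (hg.comp_aestronglyMeasurable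
      (hT.prodMk hZ).aestronglyMeasurable) ?_
    filter_upwards [hT0, hZ0] with ω hTω hZω
    simp only [Function.comp_apply, g]
    rw [Real.norm_of_nonneg (exp_pos _).le, exp_le_one_iff]
    nlinarith [le_min hTω hZω]
  have hexp_int : Integrable (fun ω => exp (-(α + μ) * T ω)) P := by
    refine Integrable.mono' (integrable_const 1) (by fun_prop) ?_
    filter_upwards [hT0] with ω hTω
    rw [Real.norm_of_nonneg (exp_pos _).le, exp_le_one_iff]
    nlinarith [mul_nonneg (by linarith : 0 ≤ α + μ) hTω]
  have := isProbabilityMeasure_expMeasure hμ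
  calc ∫ ω, g (T ω, Z ω) ∂P
      = ∫ p, g p ∂(P.map T).prod (expMeasure μ) := by
        rw [← hTZ_law, integral_map (hT.prodMk hZ).aemeasurable hg.aestronglyMeasurable]
    _ = ∫ t, ∫ z, g (t, z) ∂expMeasure μ ∂P.map T := integral_prod g (hTZ_law ▸ hint)
    _ = ∫ t, (μ / (α + μ) + α / (α + μ) * exp (-(α + μ) * t)) ∂P.map T := by
        refine integral_congr_ae ?_
        filter_upwards [hT0'] with t ht
        exact integral_exp_neg_mul_min_expMeasure hμ (by linarith) ht
    _ = ∫ ω, (μ / (α + μ) + α / (α + μ) * exp (-(α + μ) * T ω)) ∂P :=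
        integral_map hT.aemeasurable (by fun_prop)
    _ = μ / (α + μ) + α / (α + μ) * mgf T P (-(α + μ)) := by
        rw [integral_add (integrable_const _) (hexp_int.const_mul _), integral_const,
          integral_const_mul, probReal_univ, one_smul, mgf]

/-- For mutually independent `Y ~ Erlang(m, (c-1)μ)`, `X ~ Exp(μ)`, `Z ~ Exp(μ)` and
`η = α/μ`, one has `E[exp(-α·min(Y+X, Z))] = (η((c-1)/(η+c))^m + η + 2)/(η²+3η+2)`. -/
theorem stmt_8 {Ω : Type*} [MeasureSpace Ω] [IsProbabilityMeasure (ℙ : Measure Ω)]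
    (c m : ℕ) (hc : 2 ≤ c) (hm : 1 ≤ m) (μ α η : ℝ) (hμ : 0 < μ) (hα : 0 < α)
    (hη : η = α / μ)
    (Y X Z : Ω → ℝ) (hY : Measurable Y) (hX : Measurable X) (hZ : Measurable Z)
    (hYlaw : Measure.map Y ℙ = gammaMeasure m (((c : ℝ) - 1) * μ))
    (hXlaw : Measure.map X ℙ = expMeasure μ)
    (hZlaw : Measure.map Z ℙ = expMeasure μ)
    (hindep : iIndepFun ![Y, X, Z] ℙ) :
    ∫ ω, Real.exp (-α * min (Y ω + X ω) (Z ω)) ∂ℙ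
      = (η * (((c : ℝ) - 1) / (η + c)) ^ m + η + 2) / (η ^ 2 + 3 * η + 2) := by
  have hc1 : (0 : ℝ) < (c : ℝ) - 1 := by
    have : (2 : ℝ) ≤ c := by exact_mod_cast hc
    linarith
  have hm0 : (0 : ℝ) < m := by exact_mod_cast hm
  have hmeas : ∀ i, Measurable (![Y, X, Z] i) := fun i => by fin_cases i <;> assumption
  have hYX_Z : IndepFun (Y + X) Z ℙ := by
    simpa using hindep.indepFun_add_left hmeas 0 1 2 (by decide) (by decide)
  have hYX : IndepFun Y X ℙ := by simpa using hindep.indepFun (show (0 : Fin 3) ≠ 1 by decide)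
  have hYX0 : ∀ᵐ ω ∂ℙ, 0 ≤ (Y + X) ω := by
    filter_upwards [ae_of_ae_map hY.aemeasurable (hYlaw ▸ ae_nonneg_gammaMeasure _ _),
      ae_of_ae_map hX.aemeasurable (hXlaw ▸ ae_nonneg_expMeasure μ)] with ω hYω hXω
    exact add_nonneg hYω hXω
  have hmgf : mgf (Y + X) ℙ (-(α + μ))
      = (((c - 1) * μ) / ((c - 1) * μ + (α + μ))) ^ m * (μ / (μ + (α + μ))) := by
    rw [hYX.mgf_add' hY.aestronglyMeasurable hX.aestronglyMeasurable,
      ← mgf_id_map hY.aemeasurable, ← mgf_id_map hX.aemeasurable, hYlaw, hXlaw,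
      mgf_id_gammaMeasure hm0 (by positivity) (by linarith [mul_pos hc1 hμ]), rpow_natCast,
      mgf_id_expMeasure hμ (by linarith), sub_neg_eq_add, sub_neg_eq_add]
  have hbase : ((c - 1) * μ) / ((c - 1) * μ + (α + μ)) = ((c : ℝ) - 1) / (α / μ + c) := by
    field_simp
    ring
  have hmin := integral_exp_neg_mul_min_of_indepFun hμ hα.le (hY.add hX) hZ hYX0 hZlaw hYX_Z
  simp only [Pi.add_apply] at hmin
  rw [hmin, hmgf, hbase, hη]
  field_simp
  ring
end

section
/- Let c ≥ 1 be an integer, 0 < ρ < 1, and η > 0. Define C(c,ρ) = ((cρ)^c/((1−ρ)·c!)) / ( Σ_{s=0}^{c−1} (cρ)^s/s! + (cρ)^c/((1−ρ)·c!) ); π(s) = (c!·(1−ρ)/(s!·(cρ)^{c−s}))·C(c,ρ) for 0 ≤ s ≤ c and π(s) = (1−ρ)·ρ^{s−c}·C(c,ρ) for s > c; and for 1 ≤ i ≤ s define w(s,i) = 2/(η+2) if s < c; w(s,i) = ( η·((c−1)/(η+c))^{s−c+1} + η + 2 )/(η²+3η+2) if i ≤ c ≤ s; and w(s,i) = (c/(η+c))^{i−c}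 · ( η·((c−1)/(η+c))^{s−i+1} + η + 2 )/(η²+3η+2) if c < i ≤ s. Then 2·( Σ_{s=0}^{∞} s·π(s) − Σ_{s=0}^{∞} π(s)·Σ_{i=1}^{s} w(s,i) ) = 2·( (ρ/(1−ρ))·C(c,ρ) + cρ − (1/(η+2))·( C(c,ρ)·(2cρ − cη)/(η + c − cρ) + 2cρ ) ). -/
/-!
Below `c` the stationary probabilities are proportional to `(cρ)^s / s!`, so the Erlang-C
normalisation gives `∑_{s<c} π(s) = 1 - C`, and local balance `(s+1) π(s+1) = cρ π(s)` reduces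
`∑_{s<c} s π(s)` to `cρ(1 - C) - c π(c)`; from `c` on, `π` is geometric with ratio `ρ`.
The overlap sums `∑_i w(s,i)` are `2s/(η+2)` below `c`, and for `s = c + k` the two geometric
sums over `i` collapse (the `((c-1)/(η+c))^k` terms cancel) to `c/η` plus a multiple of
`(c/(η+c))^k`. So both series are a finite sum plus geometric series in `ρ` and `ρc/(η+c)`.
-/

open Finset

theorem sum_Icc_one_eq_sum_range {M : Type*} [AddCommMonoid M] (f : ℕ → M) (n : ℕ) :
    ∑ i ∈ Icc 1 n, f i = ∑ i ∈ range n, f (i + 1) := by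
  induction n with
  | zero => simp
  | succ n ih => rw [sum_Icc_succ_top (by omega), ih, sum_range_succ]

theorem mul_eq_one_sub_mul_of_eq_div_add {S Y d C : ℝ} (hd : d ≠ 0) (hSY : S + Y / d ≠ 0)
    (hC : C = Y / d / (S + Y / d)) : C * S * d = (1 - C) * Y := by
  rw [eq_div_iff hSY] at hC
  field_simp at hC
  linear_combination hC

theorem pow_natCast_mul_pos (c : ℕ) {ρ : ℝ} (hρ : 0 < ρ) : 0 < ((c : ℝ) * ρ) ^ c := by
  rcases c.eq_zero_or_pos with rfl | hc
  · simp
  · positivity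

noncomputable def erlangC (c : ℕ) (ρ : ℝ) : ℝ :=
  ((c * ρ) ^ c / ((1 - ρ) * (Nat.factorial c))) /
    ((∑ s ∈ Finset.range c, (c * ρ) ^ s / (Nat.factorial s)) +
      (c * ρ) ^ c / ((1 - ρ) * (Nat.factorial c)))

structure IsMMcStationary (c : ℕ) (ρ C : ℝ) (π : ℕ → ℝ) : Prop where
  of_le : ∀ s : ℕ, s ≤ c →
    π s = ((Nat.factorial c : ℝ) * (1 - ρ) / ((Nat.factorial s) * (c * ρ) ^ (c - s))) * C
  of_gt : ∀ s : ℕ, c < s → π s = (1 - ρ) * ρ ^ (s - c) * C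

namespace IsMMcStationary

variable {c : ℕ} {ρ C : ℝ} {π : ℕ → ℝ}

theorem apply_add (hπ : IsMMcStationary c ρ C π) (k : ℕ) :
    π (k + c) = (1 - ρ) * ρ ^ k * C := by
  rcases k.eq_zero_or_pos with rfl | _
  · rw [zero_add, hπ.of_le c le_rfl, Nat.sub_self, pow_zero, pow_zero, mul_one, mul_one,
      mul_div_cancel_left₀ _ (Nat.cast_ne_zero.2 c.factorial_ne_zero)]
  · rw [hπ.of_gt _ (by omega), Nat.add_sub_cancel]

theorem eq_mul_pow_div_factorial (hπ : IsMMcStationary c ρ C π) (hc : 0 < c) (hρ : ρ ≠ 0)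
    {s : ℕ} (hs : s ≤ c) :
    π s = c.factorial * (1 - ρ) * C / ((c : ℝ) * ρ) ^ c *
      (((c : ℝ) * ρ) ^ s / s.factorial) := by
  have hcρ : (c : ℝ) * ρ ≠ 0 := mul_ne_zero (by positivity) hρ
  have hsplit : ((c : ℝ) * ρ) ^ c = ((c : ℝ) * ρ) ^ (c - s) * ((c : ℝ) * ρ) ^ s := by
    rw [← pow_add, Nat.sub_add_cancel hs]
  rw [hπ.of_le s hs, hsplit]
  field_simp

theorem sum_range (hπ : IsMMcStationary c ρ C π) (hρ0 : 0 < ρ) (hρ1 : ρ < 1)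
    (hC : C = erlangC c ρ) : ∑ s ∈ range c, π s = 1 - C := by
  have hY := pow_natCast_mul_pos c hρ0
  have hd : 0 < (1 - ρ) * (c.factorial : ℝ) := mul_pos (by linarith) (by positivity)
  have key := mul_eq_one_sub_mul_of_eq_div_add hd.ne' (by positivity) hC
  rw [sum_congr rfl fun s hs ↦
      hπ.eq_mul_pow_div_factorial (by grind) hρ0.ne' (mem_range.1 hs).le, ← mul_sum,
    div_mul_eq_mul_div, div_eq_iff hY.ne']
  linear_combination key

theorem succ_mul_succ (hπ : IsMMcStationary c ρ C π) (hρ : ρ ≠ 0) {s : ℕ} (hs : s < c) :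
    ((s : ℝ) + 1) * π (s + 1) = c * ρ * π s := by
  rw [hπ.eq_mul_pow_div_factorial (by omega) hρ hs.le,
    hπ.eq_mul_pow_div_factorial (by omega) hρ hs, Nat.factorial_succ, pow_succ]
  push_cast
  field_simp

theorem sum_range_natCast_mul (hπ : IsMMcStationary c ρ C π) (hρ0 : 0 < ρ) (hρ1 : ρ < 1)
    (hC : C = erlangC c ρ) :
    ∑ s ∈ range c, (s : ℝ) * π s = c * ρ * (1 - C) - c * ((1 - ρ) * C) := by
  have hbalance : ∑ s ∈ range (c + 1), (s : ℝ) * π s = c * ρ * (1 - C) := by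
    rw [sum_range_succ', Nat.cast_zero, zero_mul, add_zero, ← hπ.sum_range hρ0 hρ1 hC, mul_sum]
    refine sum_congr rfl fun s hs ↦ ?_
    push_cast
    exact hπ.succ_mul_succ hρ0.ne' (mem_range.1 hs)
  have hπc : π c = (1 - ρ) * C := by simpa using hπ.apply_add 0
  rw [sum_range_succ, hπc] at hbalance
  linarith

theorem hasSum_natCast_mul (hπ : IsMMcStationary c ρ C π) (hρ0 : 0 < ρ) (hρ1 : ρ < 1)
    (hC : C = erlangC c ρ) :
    HasSum (fun s : ℕ ↦ (s : ℝ) * π s) (c * ρ + ρ * C / (1 - ρ)) := by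
  have hρn : ‖ρ‖ < 1 := by rwa [Real.norm_of_nonneg hρ0.le]
  have h1ρ : 1 - ρ ≠ 0 := by linarith
  have htail : HasSum (fun k : ℕ ↦ ((k + c : ℕ) : ℝ) * π (k + c))
      ((1 - ρ) * C * (ρ / (1 - ρ) ^ 2) + (1 - ρ) * C * c * (1 - ρ)⁻¹) := by
    have e : (fun k : ℕ ↦ ((k + c : ℕ) : ℝ) * π (k + c))
        = fun k : ℕ ↦ (1 - ρ) * C * (k * ρ ^ k) + (1 - ρ) * C * c * ρ ^ k := by
      ext k
      rw [hπ.apply_add]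
      push_cast
      ring
    rw [e]
    exact ((hasSum_coe_mul_geometric_of_norm_lt_one hρn).mul_left _).add
      ((hasSum_geometric_of_lt_one hρ0.le hρ1).mul_left _)
  have hvalue : c * ρ + ρ * C / (1 - ρ) = (1 - ρ) * C * (ρ / (1 - ρ) ^ 2)
      + (1 - ρ) * C * c * (1 - ρ)⁻¹ + ∑ s ∈ range c, (s : ℝ) * π s := by
    rw [hπ.sum_range_natCast_mul hρ0 hρ1 hC]
    field_simp
    ring
  rw [hvalue]
  exact (hasSum_nat_add_iff c).1 htail

theorem hasSum_mul_of_eq_add_mul_pow (hπ : IsMMcStationary c ρ C π) (hρ0 : 0 < ρ)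
    (hρ1 : ρ < 1) {g : ℕ → ℝ} {a b q : ℝ} (hq0 : 0 ≤ q) (hq1 : q ≤ 1)
    (hg : ∀ k, g (k + c) = a + b * q ^ k) :
    HasSum (fun s ↦ π s * g s)
      ((1 - ρ) * C * (a / (1 - ρ) + b / (1 - ρ * q)) + ∑ s ∈ range c, π s * g s) := by
  have hρq : ρ * q < 1 := by nlinarith
  refine (hasSum_nat_add_iff c).1 ?_
  have e : (fun k ↦ π (k + c) * g (k + c))
      = fun k ↦ (1 - ρ) * C * a * ρ ^ k + (1 - ρ) * C * b * (ρ * q) ^ k := by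
    ext k
    rw [hπ.apply_add, hg, mul_pow]
    ring
  rw [e, div_eq_mul_inv, div_eq_mul_inv, mul_add, ← mul_assoc, ← mul_assoc]
  exact ((hasSum_geometric_of_lt_one hρ0.le hρ1).mul_left _).add
    ((hasSum_geometric_of_lt_one (by positivity) hρq).mul_left _)

end IsMMcStationary

section SojournOverlap

variable {c : ℕ} {η : ℝ} {w : ℕ → ℕ → ℝ}

theorem sum_overlap_of_lt
    (hw1 : ∀ s i : ℕ, 1 ≤ i → i ≤ s → s < c → w s i = 2 / (η + 2))
    {s : ℕ} (hs : s < c) : ∑ i ∈ Icc 1 s, w s i = s * (2 / (η + 2)) := by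
  rw [sum_congr rfl fun i hi ↦ hw1 s i (mem_Icc.1 hi).1 (mem_Icc.1 hi).2 hs, sum_const,
    Nat.card_Icc, nsmul_eq_mul, Nat.add_sub_cancel]

theorem sum_overlap_add (hη : 0 < η)
    (hw2 : ∀ s i : ℕ, 1 ≤ i → i ≤ c → c ≤ s →
      w s i = (η * (((c : ℝ) - 1) / (η + c)) ^ (s - c + 1) + η + 2) / (η ^ 2 + 3 * η + 2))
    (hw3 : ∀ s i : ℕ, c < i → i ≤ s →
      w s i = ((c : ℝ) / (η + c)) ^ (i - c) *
        ((η * (((c : ℝ) - 1) / (η + c)) ^ (s - i + 1) + η + 2) / (η ^ 2 + 3 * η + 2)))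
    (k : ℕ) :
    ∑ i ∈ Icc 1 (k + c), w (k + c) i = c / η +
      c * ((c - 2) * η - 2 * c) / (η * (η + 2) * (η + c)) * ((c : ℝ) / (η + c)) ^ k := by
  set Q : ℝ := c / (η + c) with hQ
  set B : ℝ := ((c : ℝ) - 1) / (η + c) with hB
  set D : ℝ := η ^ 2 + 3 * η + 2 with hD
  have hηc : 0 < η + c := by positivity
  have hQB : Q - B = (η + c)⁻¹ := by
    rw [hQ, hB]
    field_simp
    ring
  have hQ1 : Q - 1 = -(η / (η + c)) := by
    rw [hQ]
    field_simp
    ring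
  have hQB' : Q ≠ B := sub_ne_zero.1 (by rw [hQB]; positivity)
  have hQ1' : Q ≠ 1 := sub_ne_zero.1 (by rw [hQ1]; exact neg_ne_zero.2 (by positivity))
  have hhead : ∑ i ∈ range c, w (c + k) (i + 1) = c * ((η * (B ^ k * B) + η + 2) / D) := by
    rw [sum_congr rfl fun i hi ↦ hw2 _ _ (by omega) (mem_range.1 hi) (by omega), sum_const,
      card_range, nsmul_eq_mul, Nat.add_sub_cancel_left, pow_succ]
  have htail : ∑ j ∈ range k, w (c + k) (c + j + 1)
      = η * Q * B / D * ∑ j ∈ range k, Q ^ j * B ^ (k - 1 - j)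
        + (η + 2) * Q / D * ∑ j ∈ range k, Q ^ j := by
    rw [mul_sum, mul_sum, ← sum_add_distrib]
    refine sum_congr rfl fun j hj ↦ ?_
    have hj := mem_range.1 hj
    rw [hw3 _ _ (by omega) (by omega), show c + j + 1 - c = j + 1 by omega,
      show c + k - (c + j + 1) + 1 = k - 1 - j + 1 by omega]
    ring
  rw [add_comm k c, sum_Icc_one_eq_sum_range, sum_range_add, hhead, htail,
    (Commute.all Q B).geom_sum₂ hQB', geom_sum_eq hQ1', hQB, hQ1]
  generalize Q ^ k = Qk
  generalize B ^ k = Bk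
  rw [hQ, hB, hD]
  field_simp
  ring

end SojournOverlap

theorem stmt_11_general (c : ℕ) (ρ η : ℝ) (hρ0 : 0 < ρ) (hρ1 : ρ < 1) (hη : 0 < η)
    (C : ℝ)
    (hC : C = ((c * ρ) ^ c / ((1 - ρ) * (Nat.factorial c))) /
        ((∑ s ∈ Finset.range c, (c * ρ) ^ s / (Nat.factorial s)) +
          (c * ρ) ^ c / ((1 - ρ) * (Nat.factorial c))))
    (π : ℕ → ℝ)
    (hπle : ∀ s : ℕ, s ≤ c →
      π s = ((Nat.factorial c : ℝ) * (1 - ρ) / ((Nat.factorial s) * (c * ρ) ^ (c - s))) * C)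
    (hπgt : ∀ s : ℕ, c < s → π s = (1 - ρ) * ρ ^ (s - c) * C)
    (w : ℕ → ℕ → ℝ)
    (hw1 : ∀ s i : ℕ, 1 ≤ i → i ≤ s → s < c → w s i = 2 / (η + 2))
    (hw2 : ∀ s i : ℕ, 1 ≤ i → i ≤ c → c ≤ s →
      w s i = (η * (((c : ℝ) - 1) / (η + c)) ^ (s - c + 1) + η + 2) / (η ^ 2 + 3 * η + 2))
    (hw3 : ∀ s i : ℕ, c < i → i ≤ s →
      w s i = ((c : ℝ) / (η + c)) ^ (i - c) *
        ((η * (((c : ℝ) - 1) / (η + c)) ^ (s - i + 1) + η + 2) / (η ^ 2 + 3 * η + 2))) :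
    2 * ((∑' s : ℕ, (s : ℝ) * π s) - ∑' s : ℕ, π s * ∑ i ∈ Finset.Icc 1 s, w s i)
      = 2 * ((ρ / (1 - ρ)) * C + c * ρ -
          (1 / (η + 2)) * (C * ((2 * c * ρ - c * η) / (η + c - c * ρ)) + 2 * c * ρ)) := by
  have hπ : IsMMcStationary c ρ C π := ⟨hπle, hπgt⟩
  have hηc : 0 < η + c := by positivity
  have hfinite : ∑ s ∈ range c, π s * ∑ i ∈ Icc 1 s, w s i
      = 2 / (η + 2) * (c * ρ * (1 - C) - c * ((1 - ρ) * C)) := by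
    rw [← hπ.sum_range_natCast_mul hρ0 hρ1 hC, mul_sum]
    refine sum_congr rfl fun s hs ↦ ?_
    rw [sum_overlap_of_lt hw1 (mem_range.1 hs)]
    ring
  have hoverlap := hπ.hasSum_mul_of_eq_add_mul_pow hρ0 hρ1
    (g := fun s ↦ ∑ i ∈ Icc 1 s, w s i)
    (by positivity) (div_le_one_of_le₀ (by linarith) hηc.le) (sum_overlap_add hη hw2 hw3)
  rw [(hπ.hasSum_natCast_mul hρ0 hρ1 hC).tsum_eq, hoverlap.tsum_eq, hfinite]
  have h1ρ : 1 - ρ ≠ 0 := by linarith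
  have hden : η + c - c * ρ ≠ 0 := by nlinarith
  rw [show 1 - ρ * (c / (η + c)) = (η + c - c * ρ) / (η + c) by field_simp]
  field_simp
  ring

/-- The series evaluation constituting Proposition 3 (M/M/c value of `R₀ˢʸˢ`):
`2(Σ s·π(s) − Σ π(s)·Σ_{i=1}^s w(s,i)) = 2((ρ/(1−ρ))C + cρ − (1/(η+2))(C(2cρ−cη)/(η+c−cρ) + 2cρ))`. -/
theorem stmt_11 (c : ℕ) (hc : 1 ≤ c) (ρ η : ℝ) (hρ0 : 0 < ρ) (hρ1 : ρ < 1) (hη : 0 < η)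
    (C : ℝ)
    (hC : C = ((c * ρ) ^ c / ((1 - ρ) * (Nat.factorial c))) /
        ((∑ s ∈ Finset.range c, (c * ρ) ^ s / (Nat.factorial s)) +
          (c * ρ) ^ c / ((1 - ρ) * (Nat.factorial c))))
    (π : ℕ → ℝ)
    (hπle : ∀ s : ℕ, s ≤ c →
      π s = ((Nat.factorial c : ℝ) * (1 - ρ) / ((Nat.factorial s) * (c * ρ) ^ (c - s))) * C)
    (hπgt : ∀ s : ℕ, c < s → π s = (1 - ρ) * ρ ^ (s - c) * C)
    (w : ℕ → ℕ → ℝ)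
    (hw1 : ∀ s i : ℕ, 1 ≤ i → i ≤ s → s < c → w s i = 2 / (η + 2))
    (hw2 : ∀ s i : ℕ, 1 ≤ i → i ≤ c → c ≤ s →
      w s i = (η * (((c : ℝ) - 1) / (η + c)) ^ (s - c + 1) + η + 2) / (η ^ 2 + 3 * η + 2))
    (hw3 : ∀ s i : ℕ, c < i → i ≤ s →
      w s i = ((c : ℝ) / (η + c)) ^ (i - c) *
        ((η * (((c : ℝ) - 1) / (η + c)) ^ (s - i + 1) + η + 2) / (η ^ 2 + 3 * η + 2))) :
    2 * ((∑' s : ℕ, (s : ℝ) * π s) - ∑' s : ℕ, π s * ∑ i ∈ Finset.Icc 1 s, w s i)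
      = 2 * ((ρ / (1 - ρ)) * C + c * ρ -
          (1 / (η + 2)) * (C * ((2 * c * ρ - c * η) / (η + c - c * ρ)) + 2 * c * ρ)) :=
  stmt_11_general c ρ η hρ0 hρ1 hη C hC π hπle hπgt w hw1 hw2 hw3
end
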